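/- Let A : U × V → F be a bilinear form on finite-dimensional F-vector spaces. If (X, Y) and (X', Y') are both maximum stable pairs (stable pairs maximizing dim X + dim Y), then (X ∩ X', Y + Y') and (X + X', Y ∩ Y') are also maximum stable pairs. -/

import Mathlib

/-- A pair of subspaces `(X, Y)` is stable for the bilinear form `A` if `A`
vanishes on `X × Y`. -/
def IsStable {F U V : Type*} [Field F]
    [AddCommGroup U] [Module F U] [AddCommGroup V] [Module F V]
    (A : U →ₗ[F] V →ₗ[F] F) (X : Submodule F U) (Y : Submodule F V) : Prop :=
  ∀ x ∈ X, ∀ y ∈ Y, A x y = 0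

/-- A stable pair is maximum if it maximizes `dim X + dim Y`. -/
def IsMaxStable {F U V : Type*} [Field F]
    [AddCommGroup U] [Module F U] [AddCommGroup V] [Module F V]
    (A : U →ₗ[F] V →ₗ[F] F) (X : Submodule F U) (Y : Submodule F V) : Prop :=
  IsStable A X Y ∧
    ∀ (X' : Submodule F U) (Y' : Submodule F V), IsStable A X' Y' →
      Module.finrank F X' + Module.finrank F Y' ≤
        Module.finrank F X + Module.finrank F Y

open Module

section

variable {F U V : Type*} [Field F] [AddCommGroup U] [Module F U] [AddCommGroup V] [Module F V]
  {A : U →ₗ[F] V →ₗ[F] F} {X X' X₁ : Submodule F U} {Y Y' Y₁ : Submodule F V}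

namespace IsStable

theorem inf_sup (h : IsStable A X Y) (h' : IsStable A X' Y') :
    IsStable A (X ⊓ X') (Y ⊔ Y') := by
  intro x hx y hy
  obtain ⟨y₁, hy₁, y₂, hy₂, rfl⟩ := Submodule.mem_sup.mp hy
  rw [map_add, h x hx.1 y₁ hy₁, h' x hx.2 y₂ hy₂, add_zero]

theorem sup_inf (h : IsStable A X Y) (h' : IsStable A X' Y') :
    IsStable A (X ⊔ X') (Y ⊓ Y') := by
  intro x hx y hy
  obtain ⟨x₁, hx₁, x₂, hx₂, rfl⟩ := Submodule.mem_sup.mp hx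
  rw [map_add, LinearMap.add_apply, h x₁ hx₁ y hy.1, h' x₂ hx₂ y hy.2, add_zero]

end IsStable

namespace IsMaxStable

theorem finrank_add_eq (h : IsMaxStable A X Y) (h' : IsMaxStable A X' Y') :
    finrank F X' + finrank F Y' = finrank F X + finrank F Y :=
  le_antisymm (h.2 X' Y' h'.1) (h'.2 X Y h.1)

theorem of_isStable (h : IsMaxStable A X Y) (hs : IsStable A X₁ Y₁)
    (hle : finrank F X + finrank F Y ≤ finrank F X₁ + finrank F Y₁) :
    IsMaxStable A X₁ Y₁ :=
  ⟨hs, fun X₂ Y₂ hs₂ => (h.2 X₂ Y₂ hs₂).trans hle⟩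

end IsMaxStable

end

theorem maxStable_inf_sup
    (F U V : Type*) [Field F]
    [AddCommGroup U] [Module F U] [FiniteDimensional F U]
    [AddCommGroup V] [Module F V] [FiniteDimensional F V]
    (A : U →ₗ[F] V →ₗ[F] F)
    (X X' : Submodule F U) (Y Y' : Submodule F V)
    (h : IsMaxStable A X Y) (h' : IsMaxStable A X' Y') :
    IsMaxStable A (X ⊓ X') (Y ⊔ Y') ∧ IsMaxStable A (X ⊔ X') (Y ⊓ Y') := by
  have hinf_sup := h.1.inf_sup h'.1
  have hsup_inf := h.1.sup_inf h'.1
  have hle₁ := h.2 _ _ hinf_sup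
  have hle₂ := h.2 _ _ hsup_inf
  have heq := h.finrank_add_eq h'
  -- By the modular law the two new sums add up to twice the maximum, so neither is below it.
  have hX := Submodule.finrank_sup_add_finrank_inf_eq X X'
  have hY := Submodule.finrank_sup_add_finrank_inf_eq Y Y'
  exact ⟨h.of_isStable hinf_sup (by omega), h.of_isStable hsup_inf (by omega)⟩
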